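/- Let U ⊆ ℂ^m be open and G : U × ℂⁿ → ℝ continuous such that for every x ∈ U the function G(x,·) is positive, convex, complex homogeneous, and strictly convex; let F be the dual metric. Then F is uniformly smooth on compacts: for every ε > 0 and every compact set K ⊆ U there exists δ > 0 such that for all x ∈ K and all ξ₁, ξ₂ ∈ ℂⁿ with F(x, ξ₂) ≤ F(x, ξ₁) = 1 and F(x, ξ₁ − ξ₂) < δ, one has F(x, ξ₁ + ξ₂) ≥ F(x, ξ₁) + F(x, ξ₂) − ε·F(x, ξ₁ − ξ₂). -/

import Mathlib

/-!
Argue by contradiction and compactness. If the inequality fails at points `x_k ∈ K` with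
`F(x_k, ξ₁ - ξ₂) → 0`, pick unit functionals `η_k`, `η'_k` norming `ξ₁` and `ξ₂`. The violated
inequality forces `Re (η_k - η'_k)(ξ₁ - ξ₂) > 2ε F(ξ₁ - ξ₂)`, and since `‖ξ‖ ≲ F(x, ξ)` uniformly
on `K`, the functionals `η_k`, `η'_k` stay a fixed distance apart. Along a convergent subsequence
their limits `a ≠ b` are unit functionals at `x₀ ∈ K` that both norm the same `ξ` with
`F(x₀, ξ) ≤ 1`, so `G(x₀, a + b) ≥ Re (a + b)(ξ) = 2`, contradicting strict convexity.
-/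

open Complex Filter Asymptotics Topology

noncomputable section

/-- The ℂ-bilinear pairing `η(ξ) = ∑ i, η i * ξ i` on `ℂⁿ`. -/
def cpair {n : ℕ} (η ξ : Fin n → ℂ) : ℂ := ∑ i, η i * ξ i

/-- `G` is positive: `G η > 0` for every `η ≠ 0`. -/
def IsPositiveFn {n : ℕ} (G : (Fin n → ℂ) → ℝ) : Prop :=
  ∀ η : Fin n → ℂ, η ≠ 0 → 0 < G η

/-- `G` is complex homogeneous: `G (α • η) = |α| * G η`. -/
def IsComplexHomogeneous {n : ℕ} (G : (Fin n → ℂ) → ℝ) : Prop :=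
  ∀ (α : ℂ) (η : Fin n → ℂ), G (α • η) = ‖α‖ * G η

/-- `G` is convex (subadditive): `G (η₁ + η₂) ≤ G η₁ + G η₂`. -/
def IsConvexFn {n : ℕ} (G : (Fin n → ℂ) → ℝ) : Prop :=
  ∀ η₁ η₂ : Fin n → ℂ, G (η₁ + η₂) ≤ G η₁ + G η₂

/-- `G` is strictly convex: it is convex and `G (η₁ + η₂) < 2` whenever
`G η₁ = G η₂ = 1` and `η₁ ≠ η₂`. -/
def IsStrictlyConvexFn {n : ℕ} (G : (Fin n → ℂ) → ℝ) : Prop :=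
  IsConvexFn G ∧
    ∀ η₁ η₂ : Fin n → ℂ, G η₁ = 1 → G η₂ = 1 → η₁ ≠ η₂ → G (η₁ + η₂) < 2

/-- The dual norm `F ξ = sup {Re (η(ξ)) : G η = 1}`. -/
def dualNorm {n : ℕ} (G : (Fin n → ℂ) → ℝ) (ξ : Fin n → ℂ) : ℝ :=
  sSup {r : ℝ | ∃ η : Fin n → ℂ, G η = 1 ∧ r = (cpair η ξ).re}

/-- The dual metric `F (x, ξ) = sup {Re (η(ξ)) : G (x, η) = 1}` of a parametrized
family `G : U × ℂⁿ → ℝ`. -/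
def dualMetric {m n : ℕ} (G : (Fin m → ℂ) × (Fin n → ℂ) → ℝ)
    (x : Fin m → ℂ) (ξ : Fin n → ℂ) : ℝ :=
  dualNorm (fun η => G (x, η)) ξ

end

section Pairing
variable {n : ℕ}

lemma cpair_add_left (η η' ξ : Fin n → ℂ) : cpair (η + η') ξ = cpair η ξ + cpair η' ξ :=
  add_dotProduct η η' ξ

lemma cpair_add_right (η ξ ξ' : Fin n → ℂ) : cpair η (ξ + ξ') = cpair η ξ + cpair η ξ' :=
  dotProduct_add η ξ ξ'

lemma cpair_sub_left (η η' ξ : Fin n → ℂ) : cpair (η - η') ξ = cpair η ξ - cpair η' ξ :=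
  sub_dotProduct η η' ξ

lemma cpair_sub_right (η ξ ξ' : Fin n → ℂ) : cpair η (ξ - ξ') = cpair η ξ - cpair η ξ' :=
  dotProduct_sub η ξ ξ'

lemma cpair_neg_left (η ξ : Fin n → ℂ) : cpair (-η) ξ = -cpair η ξ :=
  neg_dotProduct η ξ

lemma cpair_smul_left (a : ℂ) (η ξ : Fin n → ℂ) : cpair (a • η) ξ = a * cpair η ξ :=
  smul_dotProduct a η ξ

lemma cpair_single_left (i : Fin n) (a : ℂ) (ξ : Fin n → ℂ) :
    cpair (Pi.single i a) ξ = a * ξ i :=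
  single_dotProduct (v := ξ) a i

lemma cpair_zero_left (ξ : Fin n → ℂ) : cpair 0 ξ = 0 :=
  zero_dotProduct ξ

lemma re_cpair_le_mul_norm_mul_norm (η ξ : Fin n → ℂ) : (cpair η ξ).re ≤ n * ‖η‖ * ‖ξ‖ :=
  calc (cpair η ξ).re ≤ ∑ i, ‖η i * ξ i‖ := (re_le_norm _).trans (norm_sum_le _ _)
    _ ≤ ∑ _i : Fin n, ‖η‖ * ‖ξ‖ := Finset.sum_le_sum fun i _ => by
        rw [norm_mul]; exact mul_le_mul (norm_le_pi_norm η i) (norm_le_pi_norm ξ i)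
          (norm_nonneg _) (norm_nonneg _)
    _ = n * ‖η‖ * ‖ξ‖ := by simp [mul_assoc]

lemma continuous_re_cpair :
    Continuous fun p : (Fin n → ℂ) × (Fin n → ℂ) => (cpair p.1 p.2).re := by
  unfold cpair; fun_prop

lemma Filter.Tendsto.re_cpair {ι : Type*} {l : Filter ι} {η ξ : ι → Fin n → ℂ}
    {a x : Fin n → ℂ} (hη : Tendsto η l (𝓝 a)) (hξ : Tendsto ξ l (𝓝 x)) :
    Tendsto (fun k => (cpair (η k) (ξ k)).re) l (𝓝 (cpair a x).re) :=
  ((continuous_re_cpair.tendsto (a, x)).comp (hη.prodMk_nhds hξ) :)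

end Pairing

namespace IsComplexHomogeneous
variable {n : ℕ} {G : (Fin n → ℂ) → ℝ}

lemma apply_zero (hG : IsComplexHomogeneous G) : G 0 = 0 := by
  simpa using hG 0 0

lemma apply_neg (hG : IsComplexHomogeneous G) (η : Fin n → ℂ) : G (-η) = G η := by
  simpa using hG (-1) η

lemma apply_inv_smul_self (hG : IsComplexHomogeneous G) {η : Fin n → ℂ} (hη : 0 < G η) :
    G ((G η : ℂ)⁻¹ • η) = 1 := by
  rw [hG, norm_inv, norm_real, Real.norm_of_nonneg hη.le, inv_mul_cancel₀ hη.ne']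

lemma bounds_of_forall_norm_eq_one (hG : IsComplexHomogeneous G) {a b : ℝ}
    (h : ∀ u, ‖u‖ = 1 → a ≤ G u ∧ G u ≤ b) (η : Fin n → ℂ) :
    a * ‖η‖ ≤ G η ∧ G η ≤ b * ‖η‖ := by
  rcases eq_or_ne η 0 with rfl | hη
  · simp [hG.apply_zero]
  have hη' : ‖η‖ ≠ 0 := norm_ne_zero_iff.2 hη
  set u := (‖η‖ : ℂ)⁻¹ • η
  have hu : ‖u‖ = 1 := by
    rw [norm_smul, norm_inv, norm_real, norm_norm, inv_mul_cancel₀ hη']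
  have hGη : G η = ‖η‖ * G u := by
    rw [hG, norm_inv, norm_real, norm_norm, mul_inv_cancel_left₀ hη']
  obtain ⟨ha, hb⟩ := h u hu
  rw [hGη, mul_comm a, mul_comm b]
  exact ⟨mul_le_mul_of_nonneg_left ha (norm_nonneg η), mul_le_mul_of_nonneg_left hb (norm_nonneg η)⟩

end IsComplexHomogeneous

section DualNorm
variable {n : ℕ} {G : (Fin n → ℂ) → ℝ} {c C : ℝ}

/-- The properties of norming functionals `η` of `ξ₁` (of dual norm one) and `η'` of `ξ₂` that
survive passing to a limit. -/
structure IsNormingPair (G : (Fin n → ℂ) → ℝ) (ξ₁ ξ₂ η η' : Fin n → ℂ) : Prop where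
  apply_left : G η = 1
  apply_right : G η' = 1
  re_cpair_left : (cpair η ξ₁).re = 1
  re_cpair_le_re_cpair : (cpair η ξ₂).re ≤ (cpair η' ξ₂).re
  re_cpair_le_apply : ∀ ζ, (cpair ζ ξ₁).re ≤ G ζ

lemma norm_le_inv_of_apply_eq_one (hc : 0 < c) (hlow : ∀ η, c * ‖η‖ ≤ G η)
    {η : Fin n → ℂ} (hη : G η = 1) : ‖η‖ ≤ c⁻¹ := by
  rw [← one_div, le_div_iff₀' hc, ← hη]
  exact hlow η

lemma re_cpair_le_dualNorm (hc : 0 < c) (hlow : ∀ η, c * ‖η‖ ≤ G η)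
    {η : Fin n → ℂ} (hη : G η = 1) (ξ : Fin n → ℂ) : (cpair η ξ).re ≤ dualNorm G ξ := by
  refine le_csSup ⟨n * c⁻¹ * ‖ξ‖, ?_⟩ ⟨η, hη, rfl⟩
  rintro _ ⟨ζ, hζ, rfl⟩
  calc (cpair ζ ξ).re ≤ n * ‖ζ‖ * ‖ξ‖ := re_cpair_le_mul_norm_mul_norm ζ ξ
    _ ≤ n * c⁻¹ * ‖ξ‖ := by gcongr; exact norm_le_inv_of_apply_eq_one hc hlow hζ

lemma dualNorm_le {ξ : Fin n → ℂ} {a : ℝ} (hne : ∃ η, G η = 1)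
    (h : ∀ η, G η = 1 → (cpair η ξ).re ≤ a) : dualNorm G ξ ≤ a := by
  obtain ⟨η, hη⟩ := hne
  exact csSup_le ⟨_, η, hη, rfl⟩ (by rintro _ ⟨ζ, hζ, rfl⟩; exact h ζ hζ)

-- `dualNorm G ξ` is `sSup ∅ = 0` when `G` never takes the value `1`.
lemma exists_apply_eq_one_of_dualNorm_ne_zero {ξ : Fin n → ℂ} (h : dualNorm G ξ ≠ 0) :
    ∃ η, G η = 1 := by
  by_contra! hne
  exact h (by simp [dualNorm, hne])

lemma dualNorm_nonneg (hc : 0 < c) (hlow : ∀ η, c * ‖η‖ ≤ G η)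
    (hhom : IsComplexHomogeneous G) (ξ : Fin n → ℂ) : 0 ≤ dualNorm G ξ := by
  by_cases hne : ∃ η, G η = 1
  · obtain ⟨η, hη⟩ := hne
    have h₁ := re_cpair_le_dualNorm hc hlow hη ξ
    have h₂ := re_cpair_le_dualNorm hc hlow ((hhom.apply_neg η).trans hη) ξ
    rw [cpair_neg_left, neg_re] at h₂
    linarith
  · simp only [not_exists] at hne
    simp [dualNorm, hne]

lemma re_cpair_le_mul_dualNorm (hc : 0 < c) (hlow : ∀ η, c * ‖η‖ ≤ G η)
    (hhom : IsComplexHomogeneous G) (η ξ : Fin n → ℂ) :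
    (cpair η ξ).re ≤ G η * dualNorm G ξ := by
  rcases eq_or_ne η 0 with rfl | hη
  · simp [cpair_zero_left, hhom.apply_zero]
  have hpos : 0 < G η := (mul_pos hc (norm_pos_iff.2 hη)).trans_le (hlow η)
  have h := re_cpair_le_dualNorm hc hlow (hhom.apply_inv_smul_self hpos) ξ
  rwa [cpair_smul_left, ← ofReal_inv, re_ofReal_mul, inv_mul_le_iff₀ hpos] at h

lemma norm_le_mul_dualNorm (hc : 0 < c) (hlow : ∀ η, c * ‖η‖ ≤ G η) (hC : 0 ≤ C)
    (hup : ∀ η, G η ≤ C * ‖η‖) (hhom : IsComplexHomogeneous G) (ξ : Fin n → ℂ) :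
    ‖ξ‖ ≤ C * dualNorm G ξ := by
  have hF := dualNorm_nonneg hc hlow hhom ξ
  refine (pi_norm_le_iff_of_nonneg (mul_nonneg hC hF)).2 fun i => ?_
  have h := re_cpair_le_mul_dualNorm hc hlow hhom (Pi.single i (starRingEnd ℂ (ξ i))) ξ
  have hG := hup (Pi.single i (starRingEnd ℂ (ξ i)))
  rw [Pi.norm_single, norm_conj] at hG
  rw [cpair_single_left, ← normSq_eq_conj_mul_self, ofReal_re, normSq_eq_norm_sq] at h
  rcases (norm_nonneg (ξ i)).eq_or_lt with h0 | hpos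
  · rw [← h0]; exact mul_nonneg hC hF
  · nlinarith [mul_le_mul_of_nonneg_right hG hF]

lemma exists_re_cpair_eq_dualNorm (hG : Continuous G) (hc : 0 < c)
    (hlow : ∀ η, c * ‖η‖ ≤ G η) (hne : ∃ η, G η = 1) (ξ : Fin n → ℂ) :
    ∃ η, G η = 1 ∧ (cpair η ξ).re = dualNorm G ξ := by
  have hS : IsCompact {η | G η = 1} :=
    (isCompact_closedBall 0 c⁻¹).of_isClosed_subset (isClosed_eq hG continuous_const)
      fun η hη => mem_closedBall_zero_iff.2 (norm_le_inv_of_apply_eq_one hc hlow hη)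
  obtain ⟨η, hη, hmax⟩ := hS.exists_isMaxOn hne
    (continuous_re_cpair.comp (continuous_id.prodMk continuous_const)).continuousOn
  exact ⟨η, hη, le_antisymm (re_cpair_le_dualNorm hc hlow hη ξ)
    (dualNorm_le hne fun ζ hζ => hmax hζ)⟩

lemma exists_isNormingPair_far_apart (hG : Continuous G) (hc : 0 < c)
    (hlow : ∀ η, c * ‖η‖ ≤ G η) (hC : 0 ≤ C) (hup : ∀ η, G η ≤ C * ‖η‖)
    (hhom : IsComplexHomogeneous G) {ε : ℝ} {ξ₁ ξ₂ : Fin n → ℂ} (h₁ : dualNorm G ξ₁ = 1)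
    (hviol : dualNorm G (ξ₁ + ξ₂) < dualNorm G ξ₁ + dualNorm G ξ₂ - ε * dualNorm G (ξ₁ - ξ₂)) :
    ∃ η η', IsNormingPair G ξ₁ ξ₂ η η' ∧ 2 * ε < n * C * ‖η - η'‖ := by
  have hne := exists_apply_eq_one_of_dualNorm_ne_zero (h₁ ▸ one_ne_zero)
  obtain ⟨η, hη, hη₁⟩ := exists_re_cpair_eq_dualNorm hG hc hlow hne ξ₁
  obtain ⟨η', hη', hη'₂⟩ := exists_re_cpair_eq_dualNorm hG hc hlow hne ξ₂
  refine ⟨η, η', ⟨hη, hη', hη₁.trans h₁, hη'₂ ▸ re_cpair_le_dualNorm hc hlow hη ξ₂,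
    fun ζ => (re_cpair_le_mul_dualNorm hc hlow hhom ζ ξ₁).trans_eq (by rw [h₁, mul_one])⟩, ?_⟩
  set t := dualNorm G (ξ₁ - ξ₂)
  have hsum := re_cpair_le_dualNorm hc hlow hη (ξ₁ + ξ₂)
  have hsum' := re_cpair_le_dualNorm hc hlow hη' (ξ₁ + ξ₂)
  have hsep : 2 * ε * t < (cpair (η - η') (ξ₁ - ξ₂)).re := by
    rw [cpair_add_right, add_re] at hsum hsum'
    rw [cpair_sub_left, cpair_sub_right, cpair_sub_right, sub_re, sub_re, sub_re]
    linarith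
  have hbound : (cpair (η - η') (ξ₁ - ξ₂)).re ≤ n * ‖η - η'‖ * (C * t) :=
    (re_cpair_le_mul_norm_mul_norm _ _).trans
      (by gcongr; exact norm_le_mul_dualNorm hc hlow hC hup hhom _)
  have hpos : 0 < (n * C * ‖η - η'‖ - 2 * ε) * t := by linarith
  linarith [pos_of_mul_pos_left hpos (dualNorm_nonneg hc hlow hhom _)]

end DualNorm

lemma IsStrictlyConvexFn.eq_of_one_le_re_cpair {n : ℕ} {G : (Fin n → ℂ) → ℝ}
    (hG : IsStrictlyConvexFn G) {ξ a b : Fin n → ℂ} (hξ : ∀ ζ, (cpair ζ ξ).re ≤ G ζ)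
    (ha : G a = 1) (hb : G b = 1) (ha' : 1 ≤ (cpair a ξ).re) (hb' : 1 ≤ (cpair b ξ).re) :
    a = b := by
  by_contra hab
  have h := hξ (a + b)
  rw [cpair_add_left, add_re] at h
  linarith [hG.2 a b ha hb hab]

section Family
variable {m n : ℕ} {U K : Set (Fin m → ℂ)} {G : (Fin m → ℂ) × (Fin n → ℂ) → ℝ}

lemma exists_norm_bounds_of_isCompact (hGcont : ContinuousOn G (U ×ˢ Set.univ))
    (hGpos : ∀ x ∈ U, IsPositiveFn fun η => G (x, η))
    (hGhom : ∀ x ∈ U, IsComplexHomogeneous fun η => G (x, η)) (hK : IsCompact K) (hKU : K ⊆ U) :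
    ∃ c > 0, ∃ C > 0, (∀ x ∈ K, ∀ η, c * ‖η‖ ≤ G (x, η)) ∧ ∀ x ∈ K, ∀ η, G (x, η) ≤ C * ‖η‖ := by
  have hS : IsCompact (K ×ˢ Metric.sphere (0 : Fin n → ℂ) 1) := hK.prod (isCompact_sphere 0 1)
  have hGS : ContinuousOn G (K ×ˢ Metric.sphere 0 1) :=
    hGcont.mono (Set.prod_mono hKU (Set.subset_univ _))
  obtain ⟨c, hc, hcS⟩ := hS.exists_forall_le' hGS fun p hp =>
    hGpos p.1 (hKU hp.1) p.2 (ne_zero_of_mem_unit_sphere ⟨p.2, hp.2⟩)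
  obtain ⟨C, hCS⟩ := hS.exists_bound_of_continuousOn hGS
  have hbd : ∀ x ∈ K, ∀ η, c * ‖η‖ ≤ G (x, η) ∧ G (x, η) ≤ max C 1 * ‖η‖ := fun x hx =>
    (hGhom x (hKU hx)).bounds_of_forall_norm_eq_one fun u hu => by
      have hxu : (x, u) ∈ K ×ˢ Metric.sphere 0 1 := ⟨hx, mem_sphere_zero_iff_norm.2 hu⟩
      exact ⟨hcS _ hxu, (Real.le_norm_self _).trans ((hCS _ hxu).trans (le_max_left _ _))⟩
  exact ⟨c, hc, max C 1, by positivity, fun x hx η => (hbd x hx η).1, fun x hx η => (hbd x hx η).2⟩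

lemma eq_of_tendsto_isNormingPair {ι : Type*} {l : Filter ι} [l.NeBot]
    {x₀ : Fin m → ℂ} (hGc : ∀ η, ContinuousAt G (x₀, η))
    (hsc : IsStrictlyConvexFn fun η => G (x₀, η))
    {x : ι → Fin m → ℂ} {ξ₁ ξ₂ η η' : ι → Fin n → ℂ} {ξ a b : Fin n → ℂ}
    (hlim : Tendsto (fun k => (x k, ξ₁ k, η k, η' k)) l (𝓝 (x₀, ξ, a, b)))
    (hdiff : Tendsto (fun k => ξ₁ k - ξ₂ k) l (𝓝 0))
    (h : ∀ k, IsNormingPair (fun ζ => G (x k, ζ)) (ξ₁ k) (ξ₂ k) (η k) (η' k)) : a = b := by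
  have hξ₁ : Tendsto ξ₁ l (𝓝 ξ) := hlim.snd_nhds.fst_nhds
  have hξ₂ : Tendsto ξ₂ l (𝓝 ξ) := by simpa using hξ₁.sub hdiff
  have hη : Tendsto η l (𝓝 a) := hlim.snd_nhds.snd_nhds.fst_nhds
  have hη' : Tendsto η' l (𝓝 b) := hlim.snd_nhds.snd_nhds.snd_nhds
  have hG : ∀ {y : ι → Fin n → ℂ} {z}, Tendsto y l (𝓝 z) →
      Tendsto (fun k => G (x k, y k)) l (𝓝 (G (x₀, z))) := fun hy =>
    (hGc _).tendsto.comp (hlim.fst_nhds.prodMk_nhds hy)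
  have ha : G (x₀, a) = 1 :=
    tendsto_nhds_unique (hG hη) (by simp only [fun k => (h k).apply_left, tendsto_const_nhds])
  have hb : G (x₀, b) = 1 :=
    tendsto_nhds_unique (hG hη') (by simp only [fun k => (h k).apply_right, tendsto_const_nhds])
  have ha' : (cpair a ξ).re = 1 := tendsto_nhds_unique (hη.re_cpair hξ₁)
    (by simp only [fun k => (h k).re_cpair_left, tendsto_const_nhds])
  have hab : (cpair a ξ).re ≤ (cpair b ξ).re :=
    le_of_tendsto_of_tendsto' (hη.re_cpair hξ₂) (hη'.re_cpair hξ₂)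
      fun k => (h k).re_cpair_le_re_cpair
  have hξ : ∀ ζ, (cpair ζ ξ).re ≤ G (x₀, ζ) := fun ζ =>
    le_of_tendsto_of_tendsto' (tendsto_const_nhds.re_cpair hξ₁) (hG tendsto_const_nhds)
      fun k => (h k).re_cpair_le_apply ζ
  exact hsc.eq_of_one_le_re_cpair hξ ha hb ha'.ge (ha'.ge.trans hab)

end Family

theorem royden_uniform_smoothness_general {m n : ℕ} (U : Set (Fin m → ℂ)) (hU : IsOpen U)
    (G : (Fin m → ℂ) × (Fin n → ℂ) → ℝ)
    (hGcont : ContinuousOn G (U ×ˢ (Set.univ : Set (Fin n → ℂ))))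
    (hGpos : ∀ x ∈ U, IsPositiveFn fun η => G (x, η))
    (hGhom : ∀ x ∈ U, IsComplexHomogeneous fun η => G (x, η))
    (hGsc : ∀ x ∈ U, IsStrictlyConvexFn fun η => G (x, η)) :
    ∀ ε > 0, ∀ K : Set (Fin m → ℂ), IsCompact K → K ⊆ U →
      ∃ δ > 0, ∀ x ∈ K, ∀ ξ₁ ξ₂ : Fin n → ℂ,
        dualMetric G x ξ₂ ≤ dualMetric G x ξ₁ → dualMetric G x ξ₁ = 1 →
        dualMetric G x (ξ₁ - ξ₂) < δ →
        dualMetric G x ξ₁ + dualMetric G x ξ₂ - ε * dualMetric G x (ξ₁ - ξ₂) ≤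
          dualMetric G x (ξ₁ + ξ₂) := by
  intro ε hε K hK hKU
  obtain ⟨c, hc, C, hC, hlow, hup⟩ := exists_norm_bounds_of_isCompact hGcont hGpos hGhom hK hKU
  by_contra! hbad
  choose x hxK ξ₁ ξ₂ _ h₁ hsmall hviol using fun k : ℕ => hbad (1 / (k + 1)) Nat.one_div_pos_of_nat
  have hxU k : x k ∈ U := hKU (hxK k)
  have hnorm k := norm_le_mul_dualNorm hc (hlow _ (hxK k)) hC.le (hup _ (hxK k)) (hGhom _ (hxU k))
  choose η η' hpair hfar using fun k => exists_isNormingPair_far_apart (G := fun ζ => G (x k, ζ))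
    (hGcont.comp_continuous (continuous_const.prodMk continuous_id) fun _ => ⟨hxU k, trivial⟩)
    hc (hlow _ (hxK k)) hC.le (hup _ (hxK k)) (hGhom _ (hxU k)) (h₁ k) (hviol k)
  have hdiff : Tendsto (fun k => ξ₁ k - ξ₂ k) atTop (𝓝 0) := by
    refine squeeze_zero_norm (fun k => (hnorm k _).trans
      (mul_le_mul_of_nonneg_left (hsmall k).le hC.le)) ?_
    simpa using tendsto_one_div_add_atTop_nhds_zero_nat.const_mul C
  have hball k {ζ} (hζ : G (x k, ζ) = 1) : ζ ∈ Metric.closedBall 0 c⁻¹ :=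
    mem_closedBall_zero_iff.2 (norm_le_inv_of_apply_eq_one hc (hlow _ (hxK k)) hζ)
  obtain ⟨⟨x₀, ξ, a, b⟩, ⟨hx₀, -⟩, φ, hφ, hlim⟩ :=
    (hK.prod ((isCompact_closedBall 0 C).prod ((isCompact_closedBall 0 c⁻¹).prod
      (isCompact_closedBall 0 c⁻¹)))).tendsto_subseq (x := fun k => (x k, ξ₁ k, η k, η' k))
      fun k => ⟨hxK k, mem_closedBall_zero_iff.2
        ((hnorm k (ξ₁ k)).trans_eq (by rw [← dualMetric, h₁ k, mul_one])),
        hball k (hpair k).apply_left, hball k (hpair k).apply_right⟩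
  have hab : a = b := eq_of_tendsto_isNormingPair
    (fun _ => hGcont.continuousAt ((hU.prod isOpen_univ).mem_nhds ⟨hKU hx₀, trivial⟩))
    (hGsc x₀ (hKU hx₀)) hlim (hdiff.comp hφ.tendsto_atTop) fun k => hpair (φ k)
  have hfar_lim : 2 * ε ≤ n * C * ‖a - b‖ :=
    ge_of_tendsto (((hlim.snd_nhds.snd_nhds.fst_nhds.sub
      hlim.snd_nhds.snd_nhds.snd_nhds).norm).const_mul _) (.of_forall fun k => (hfar (φ k)).le)
  rw [hab, sub_self, norm_zero, mul_zero] at hfar_lim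
  linarith

/-- **Uniform smoothness of the dual metric on compacts (Claim 2 (2) in the proof of
Royden's criterion).**  If `G : U × ℂⁿ → ℝ` is continuous and each `G (x, ·)` is positive,
convex, complex homogeneous and strictly convex, then the dual metric `F` satisfies: for
every `ε > 0` and compact `K ⊆ U` there is `δ > 0` such that for `x ∈ K` and `ξ₁, ξ₂`
with `F (x, ξ₂) ≤ F (x, ξ₁) = 1` and `F (x, ξ₁ − ξ₂) < δ`, one has
`F (x, ξ₁ + ξ₂) ≥ F (x, ξ₁) + F (x, ξ₂) − ε·F (x, ξ₁ − ξ₂)`. -/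
theorem royden_uniform_smoothness {m n : ℕ} (U : Set (Fin m → ℂ)) (hU : IsOpen U)
    (G : (Fin m → ℂ) × (Fin n → ℂ) → ℝ)
    (hGcont : ContinuousOn G (U ×ˢ (Set.univ : Set (Fin n → ℂ))))
    (hGpos : ∀ x ∈ U, IsPositiveFn fun η => G (x, η))
    (hGconv : ∀ x ∈ U, IsConvexFn fun η => G (x, η))
    (hGhom : ∀ x ∈ U, IsComplexHomogeneous fun η => G (x, η))
    (hGsc : ∀ x ∈ U, IsStrictlyConvexFn fun η => G (x, η)) :
    ∀ ε > 0, ∀ K : Set (Fin m → ℂ), IsCompact K → K ⊆ U →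
      ∃ δ > 0, ∀ x ∈ K, ∀ ξ₁ ξ₂ : Fin n → ℂ,
        dualMetric G x ξ₂ ≤ dualMetric G x ξ₁ → dualMetric G x ξ₁ = 1 →
        dualMetric G x (ξ₁ - ξ₂) < δ →
        dualMetric G x ξ₁ + dualMetric G x ξ₂ - ε * dualMetric G x (ξ₁ - ξ₂) ≤
          dualMetric G x (ξ₁ + ξ₂) :=
  royden_uniform_smoothness_general U hU G hGcont hGpos hGhom hGsc
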